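/- arXiv:1502.02933 — 3 statements merged into one kernel-verified Lean document; each statement's English description precedes it below -/
import Mathlib

section
/- Let G be a P5-free graph in which no longest cycle is dominating, let C be a longest cycle of G (with orientation) minimizing first μ(C) and then ω(C), and let H be a component of G − C with |H| = μ(C) ≥ 2. If v1 and v2 are distinct vertices on C each with a neighbor in H and |N_G(v1; H) ∪ N_G(v2; H)| ≥ 2, then v1⁻²v2⁻² is not an edge of G. -/
open SimpleGraph

variable {V : Type*} [Fintype V] [DecidableEq V]

/-- `p 0, p 1, ..., p (n-1)` is a path of order `n` in `G`. -/
def IsPathOn (G : SimpleGraph V) (n : ℕ) (p : ℕ → V) : Prop :=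
  (∀ i j, i < n → j < n → p i = p j → i = j) ∧
  (∀ i, i + 1 < n → G.Adj (p i) (p (i + 1)))

/-- An induced path of order `n` in `G`. -/
def IsInducedPathOn (G : SimpleGraph V) (n : ℕ) (p : ℕ → V) : Prop :=
  IsPathOn G n p ∧ ∀ i j, i < n → j < n → G.Adj (p i) (p j) → (i + 1 = j ∨ j + 1 = i)

/-- `G` contains no induced path on 5 vertices. -/
def P5Free (G : SimpleGraph V) : Prop := ¬ ∃ p : ℕ → V, IsInducedPathOn G 5 p

/-- `G` contains no induced `K₄` minus an edge. -/
def K4mFree (G : SimpleGraph V) : Prop :=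
  ¬ ∃ a b c d : V, a ≠ b ∧ a ≠ c ∧ a ≠ d ∧ b ≠ c ∧ b ≠ d ∧ c ≠ d ∧
    G.Adj a b ∧ G.Adj a c ∧ G.Adj a d ∧ G.Adj b c ∧ G.Adj b d ∧ ¬ G.Adj c d

/-- `G` contains no induced `W*` (two triangles `abc`, `def` joined by the edge `cd`). -/
def WStarFree (G : SimpleGraph V) : Prop :=
  ¬ ∃ a b c d e f : V, List.Nodup [a, b, c, d, e, f] ∧
    G.Adj a b ∧ G.Adj b c ∧ G.Adj a c ∧ G.Adj d e ∧ G.Adj e f ∧ G.Adj d f ∧ G.Adj c d ∧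
    ¬ G.Adj a d ∧ ¬ G.Adj a e ∧ ¬ G.Adj a f ∧
    ¬ G.Adj b d ∧ ¬ G.Adj b e ∧ ¬ G.Adj b f ∧ ¬ G.Adj c e ∧ ¬ G.Adj c f

/-- `G` contains no induced paw (triangle `abc` with pendant edge `cd`). -/
def Z1Free (G : SimpleGraph V) : Prop :=
  ¬ ∃ a b c d : V, List.Nodup [a, b, c, d] ∧
    G.Adj a b ∧ G.Adj b c ∧ G.Adj a c ∧ G.Adj c d ∧ ¬ G.Adj a d ∧ ¬ G.Adj b d

/-- An (oriented) cycle of length `n` in `G`, as an injective map `ZMod n → V`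
with consecutive vertices adjacent. -/
def IsCycleOn (G : SimpleGraph V) (n : ℕ) (c : ZMod n → V) : Prop :=
  3 ≤ n ∧ Function.Injective c ∧ ∀ i, G.Adj (c i) (c (i + 1))

/-- A longest cycle of `G`. -/
def IsLongestCycle (G : SimpleGraph V) (n : ℕ) (c : ZMod n → V) : Prop :=
  IsCycleOn G n c ∧ ∀ (m : ℕ) (d : ZMod m → V), IsCycleOn G m d → m ≤ n

/-- A dominating cycle: every edge of `G` is incident with a vertex of the cycle. -/
def DominatingCycle (G : SimpleGraph V) (n : ℕ) (c : ZMod n → V) : Prop :=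
  IsCycleOn G n c ∧ ∀ u v : V, G.Adj u v → u ∈ Set.range c ∨ v ∈ Set.range c

/-- `H` is (the vertex set of) a connected component of `G - R`. -/
def IsCompOff (G : SimpleGraph V) (R : Set V) (H : Set V) : Prop :=
  H.Nonempty ∧ Disjoint H R ∧ (G.induce H).Connected ∧
  ∀ u v : V, u ∈ H → v ∉ H → v ∉ R → ¬ G.Adj u v

/-- `μ`: the maximum order of a component of `G - R`. -/
noncomputable def muC (G : SimpleGraph V) (R : Set V) : ℕ :=
  sSup {k | ∃ H : Set V, IsCompOff G R H ∧ H.ncard = k}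

/-- `ω`: the number of components of `G - R` of maximum order. -/
noncomputable def omegaC (G : SimpleGraph V) (R : Set V) : ℕ :=
  {H : Set V | IsCompOff G R H ∧ H.ncard = muC G R}.ncard

/-- `G` is 2-connected: at least 3 vertices, connected, and removing any
vertex leaves it connected. -/
def TwoConnected (G : SimpleGraph V) : Prop :=
  3 ≤ Fintype.card V ∧ G.Connected ∧
  ∀ v : V, (G.induce ({v}ᶜ : Set V)).Connected

/-- The set of indices of `ZMod n` encountered going from `s` to `t` in the
positive direction (including both `s` and `t`). -/
def seg (n : ℕ) (s t : ZMod n) : Set (ZMod n) :=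
  {x | ∃ k : ℕ, x = s + (k : ZMod n) ∧ ∀ m : ℕ, m < k → s + (m : ZMod n) ≠ t}

/-- `G` is complete multipartite: the vertices partition into classes of an
equivalence relation which are independent, with all edges between classes. -/
def CompleteMultipartite (G : SimpleGraph V) : Prop :=
  ∃ r : V → V → Prop, Equivalence r ∧ ∀ u v : V, u ≠ v → (G.Adj u v ↔ ¬ r u v)

/-- A `C`-path (for `R = V(C)`): a path of order at least 2 whose ends lie in
`R` and whose internal vertices avoid `R`. -/
def IsCPath (G : SimpleGraph V) (R : Set V) (m : ℕ) (p : ℕ → V) : Prop :=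
  2 ≤ m ∧ IsPathOn G m p ∧ p 0 ∈ R ∧ p (m - 1) ∈ R ∧
  ∀ i, 0 < i → i < m - 1 → p i ∉ R

/-!
Let `x₁ ≠ x₂` be neighbours in `H` of `v₁ = c i1` and `v₂ = c i2`, joined by a path `P` inside `H`,
and suppose `v₁⁻² v₂⁻²` is an edge. Leaving `C` at `v₁` along `P`, running forward from `v₂` to
`v₁⁻²`, crossing to `v₂⁻²` and running backward to `v₁` gives a cycle `C'` that misses only `v₁⁻¹`
and `v₂⁻¹`; since `|P| ≥ 2`, `C'` is again a longest cycle. Similar reroutings show that `v₁⁻¹`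
has no neighbour in `H`, is adjacent to neither `v₂⁻¹` nor `v₂⁻²`, and that an off-cycle
neighbour `w` of `v₁⁻¹` is adjacent to none of `v₁⁻²`, `v₂⁻²`, `v₂⁻¹`, so that
`w v₁⁻¹ v₁⁻² v₂⁻² v₂⁻¹` would be an induced `P₅`. Hence `v₁⁻¹` and `v₂⁻¹` are isolated in
`G - C'`, whose components are these two singletons, proper parts of `H`, and the components of
`G - C` other than `H`. As `|H| = μ(C) ≥ 2`, this gives `μ(C') = μ(C)` and `ω(C') < ω(C)`,
contradicting the choice of `C`.
-/

theorem List.IsChain.cons_append_singleton {α : Type*} {R : α → α → Prop} {l : List α}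
    {u v x y : α} (hl : l.IsChain R) (hx : l.head? = some x) (hy : l.getLast? = some y)
    (hux : R u x) (hyv : R y v) : (u :: (l ++ [v])).IsChain R :=
  List.isChain_cons.mpr ⟨by simp_all [List.head?_append], hl.append (.singleton v) (by simp_all)⟩

theorem List.two_le_length_of_head?_of_getLast? {α : Type*} {l : List α} {x y : α}
    (hx : l.head? = some x) (hy : l.getLast? = some y) (hxy : x ≠ y) : 2 ≤ l.length := by
  match l with
  | [] => simp at hx
  | [z] => simp_all
  | _ :: _ :: _ => simp

theorem Set.exists_ne_of_two_le_ncard_union {α : Type*} {A B : Set α} (hA : A.Nonempty)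
    (hB : B.Nonempty) (h : 2 ≤ (A ∪ B).ncard) : ∃ a ∈ A, ∃ b ∈ B, a ≠ b := by
  by_contra! hAB
  obtain ⟨a, ha⟩ := hA
  obtain ⟨b, hb⟩ := hB
  have hsub : A ∪ B ⊆ {b} := by
    rintro x (hx | hx)
    exacts [hAB x hx b hb, ((hAB a ha x hx).symm.trans (hAB a ha b hb) :)]
  have := (Set.ncard_le_ncard hsub).trans (Set.ncard_singleton b).le
  omega

section ZMod

variable {n : ℕ}

theorem ZMod.add_natCast_val_sub [NeZero n] (a b : ZMod n) : a + ((b - a).val : ZMod n) = b := by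
  rw [ZMod.natCast_zmod_val, add_sub_cancel]

theorem ZMod.add_natCast_sub_of_le [NeZero n] (a b : ZMod n) {t : ℕ} (ht : t ≤ (b - a).val) :
    a + (((b - a).val - t : ℕ) : ZMod n) = b - t := by
  rw [Nat.cast_sub ht, ← add_sub_assoc, ZMod.add_natCast_val_sub]

theorem ZMod.add_natCast_sub_self (a : ZMod n) {t : ℕ} (ht : t ≤ n) :
    a + ((n - t : ℕ) : ZMod n) = a - t := by
  rw [Nat.cast_sub ht, ZMod.natCast_self]
  ring

theorem ZMod.val_sub_add_val_sub [NeZero n] {a b : ZMod n} (hab : a ≠ b) :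
    (a - b).val + (b - a).val = n := by
  have hba : b - a ≠ 0 := sub_ne_zero.mpr hab.symm
  rw [← neg_sub b a, ZMod.neg_val, if_neg hba]
  have := (b - a).val_lt
  omega

end ZMod

section CycleList

variable {V : Type*} {G : SimpleGraph V}

theorem exists_isCycleOn_of_isChain {v : V} {L : List V} (h3 : 3 ≤ L.length) (hnd : L.Nodup)
    (hch : (v :: L).IsChain G.Adj) (hv : L.getLast? = some v) :
    ∃ f : ZMod L.length → V, IsCycleOn G L.length f ∧ Set.range f = {x | x ∈ L} := by
  have : NeZero L.length := ⟨by omega⟩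
  have : Fact (1 < L.length) := ⟨by omega⟩
  have hL : L ≠ [] := List.ne_nil_of_length_pos (by omega)
  have hlast : L[L.length - 1] = v := by
    rw [List.getLast?_eq_getElem?, List.getElem?_eq_getElem (by omega)] at hv
    exact Option.some_injective _ hv
  have hfirst : G.Adj v L[0] := by
    obtain ⟨x, l, rfl⟩ := List.exists_cons_of_ne_nil hL
    exact (List.isChain_cons_cons.mp hch).1
  refine ⟨fun i => L[i.val]'i.val_lt, ⟨h3, fun i j h => ZMod.val_injective _ ?_, fun i => ?_⟩, ?_⟩
  · exact hnd.getElem_inj_iff.mp h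
  · have hval : (i + 1).val = (i.val + 1) % L.length := by rw [ZMod.val_add, ZMod.val_one]
    rcases Nat.lt_or_ge (i.val + 1) L.length with hi | hi
    · simp only [hval, Nat.mod_eq_of_lt hi]
      exact List.isChain_iff_getElem.mp hch.tail i.val hi
    · have hi : i.val = L.length - 1 := by have := i.val_lt; omega
      simp only [hval, hi, Nat.sub_add_cancel (by omega : 1 ≤ L.length), Nat.mod_self, hlast]
      exact hfirst
  · ext x
    simp only [Set.mem_range, Set.mem_ofPred_eq, List.mem_iff_getElem]
    constructor
    · rintro ⟨i, rfl⟩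
      exact ⟨i.val, i.val_lt, rfl⟩
    · rintro ⟨k, hk, rfl⟩
      exact ⟨k, by simp only [ZMod.val_cast_of_lt hk]⟩

variable {n : ℕ} {c : ZMod n → V}

theorem IsCycleOn.eq_of_apply_add_eq (hc : IsCycleOn G n c) {a : ZMod n} {s t : ℕ} (hs : s < n) (ht : t < n)
    (h : c (a + s) = c (a + t)) : s = t := by
  have := (ZMod.natCast_eq_natCast_iff' s t n).mp (add_left_cancel (hc.2.1 h))
  rwa [Nat.mod_eq_of_lt hs, Nat.mod_eq_of_lt ht] at this

theorem IsCycleOn.adj_sub_two_sub_one (hc : IsCycleOn G n c) (j : ZMod n) :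
    G.Adj (c (j - 2)) (c (j - 1)) := by
  convert hc.2.2 (j - 2) using 2
  ring

theorem IsLongestCycle.length_le_of_isChain (hc : IsLongestCycle G n c) {v : V} {L : List V}
    (hnd : L.Nodup) (hch : (v :: L).IsChain G.Adj) (hv : L.getLast? = some v) :
    L.length ≤ n := by
  by_cases h3 : 3 ≤ L.length
  · obtain ⟨f, hf, -⟩ := exists_isCycleOn_of_isChain h3 hnd hch hv
    exact hc.2 _ f hf
  · have := hc.1.1
    omega

end CycleList

section Arc

variable {V : Type*} {G : SimpleGraph V} {n : ℕ} {c : ZMod n → V} {a : ZMod n}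

def arc (c : ZMod n → V) (a : ZMod n) (s k : ℕ) : List V :=
  (List.range' s k).map fun t : ℕ => c (a + (t : ZMod n))

theorem mem_arc {s k : ℕ} {x : V} : x ∈ arc c a s k ↔ ∃ t, (s ≤ t ∧ t < s + k) ∧ c (a + t) = x := by
  simp [arc]

theorem arc_succ (s k : ℕ) : arc c a s (k + 1) = c (a + s) :: arc c a (s + 1) k := by
  simp [arc, List.range'_succ]

theorem arc_concat (s k : ℕ) : arc c a s (k + 1) = arc c a s k ++ [c (a + (s + k : ℕ))] := by
  simp [arc, List.range'_1_concat]

theorem IsCycleOn.isChain_arc (hc : IsCycleOn G n c) (s k : ℕ) : (arc c a s k).IsChain G.Adj := by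
  refine (List.isChain_map _).mpr ((List.isChain_range' s k 1).imp fun t t' ht => ?_)
  rw [ht, Nat.cast_add, Nat.cast_one, ← add_assoc]
  exact hc.2.2 _

theorem IsCycleOn.nodup_arc_append_arc (hc : IsCycleOn G n c) {d k k' : ℕ} (hk : k ≤ d)
    (hd : d + k' ≤ n) : (arc c a 0 k ++ arc c a d k').Nodup := by
  rw [arc, arc, ← List.map_append]
  refine List.Nodup.map_on (fun s hs t ht h => ?_) ?_
  · simp only [List.mem_append, List.mem_range'_1] at hs ht
    exact hc.eq_of_apply_add_eq (by omega) (by omega) h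
  · refine List.nodup_append.mpr ⟨List.nodup_range', List.nodup_range', fun s hs t ht => ?_⟩
    simp only [List.mem_range'_1] at hs ht
    omega

end Arc

section Chord

variable {V : Type*} {G : SimpleGraph V} {n : ℕ} {c : ZMod n → V} {a : ZMod n} {d k₁ k₂ : ℕ}
  {P W : List V}

/-- The closed walk `c a, P, c (a + d), …, c (a + d + k₁), W, c (a + k₂), …, c (a + 1), c a`
without its initial vertex. -/
def chordCycle (c : ZMod n → V) (a : ZMod n) (d k₁ k₂ : ℕ) (P W : List V) : List V :=
  P ++ (arc c a d (k₁ + 1) ++ (W ++ (arc c a 0 (k₂ + 1)).reverse))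

theorem length_chordCycle :
    (chordCycle c a d k₁ k₂ P W).length = P.length + W.length + k₁ + k₂ + 2 := by
  simp only [chordCycle, arc, List.length_append, List.length_reverse, List.length_map,
    List.length_range']
  omega

theorem mem_chordCycle {x : V} : x ∈ chordCycle c a d k₁ k₂ P W ↔
    x ∈ P ∨ x ∈ W ∨ ∃ t : ℕ, (t ≤ k₂ ∨ d ≤ t ∧ t ≤ d + k₁) ∧ c (a + t) = x := by
  simp only [chordCycle, List.mem_append, List.mem_reverse, mem_arc]
  constructor
  · rintro (h | ⟨t, ht, rfl⟩ | h | ⟨t, ht, rfl⟩)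
    exacts [.inl h, .inr (.inr ⟨t, by omega, rfl⟩), .inr (.inl h), .inr (.inr ⟨t, by omega, rfl⟩)]
  · rintro (h | h | ⟨t, ht | ht, rfl⟩)
    exacts [.inl h, .inr (.inr (.inl h)), .inr (.inr (.inr ⟨t, by omega, rfl⟩)),
      .inr (.inl ⟨t, by omega, rfl⟩)]

theorem getLast?_chordCycle : (chordCycle c a d k₁ k₂ P W).getLast? = some (c a) := by
  simp [chordCycle, arc_succ 0 k₂, List.getLast?_append]

theorem IsCycleOn.nodup_chordCycle (hc : IsCycleOn G n c) (hk₂ : k₂ < d) (hk₁ : d + k₁ < n)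
    (hPW : (P ++ W).Nodup) (hoff : ∀ x ∈ P ++ W, x ∉ Set.range c) :
    (chordCycle c a d k₁ k₂ P W).Nodup := by
  have hperm : (chordCycle c a d k₁ k₂ P W).Perm
      ((P ++ W) ++ (arc c a 0 (k₂ + 1) ++ arc c a d (k₁ + 1))) :=
    have := Classical.decEq V
    List.perm_iff_count.mpr fun x => by
      simp only [chordCycle, List.count_append, List.count_reverse]
      omega
  refine hperm.nodup_iff.mpr (List.nodup_append.mpr
    ⟨hPW, hc.nodup_arc_append_arc (by omega) (by omega), fun x hx y hy hxy => ?_⟩)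
  rcases List.mem_append.mp hy with hy | hy <;> obtain ⟨t, -, rfl⟩ := mem_arc.mp hy <;>
    exact hoff x hx ⟨_, hxy.symm⟩

theorem IsCycleOn.isChain_chordCycle (hc : IsCycleOn G n c)
    (hP : (c a :: (P ++ [c (a + d)])).IsChain G.Adj)
    (hW : (c (a + (d + k₁ : ℕ)) :: (W ++ [c (a + k₂)])).IsChain G.Adj) :
    (c a :: chordCycle c a d k₁ k₂ P W).IsChain G.Adj := by
  have hback : (arc c a 0 (k₂ + 1)).reverse = c (a + k₂) :: (arc c a 0 k₂).reverse := by
    simp [arc_concat]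
  have hfwd : arc c a d (k₁ + 1) ++ (W ++ (arc c a 0 (k₂ + 1)).reverse) =
      arc c a d k₁ ++ c (a + (d + k₁ : ℕ)) :: (W ++ c (a + k₂) :: (arc c a 0 k₂).reverse) := by
    simp [arc_concat]
  have hsplit : c a :: chordCycle c a d k₁ k₂ P W =
      c a :: (P ++ c (a + d) :: (arc c a (d + 1) k₁ ++ (W ++ (arc c a 0 (k₂ + 1)).reverse))) := by
    rw [chordCycle, arc_succ]
    rfl
  rw [hsplit, List.isChain_cons_split]
  refine ⟨hP, ?_⟩
  rw [← List.cons_append, ← arc_succ, hfwd, List.isChain_split, List.isChain_cons_split, ← hback,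
    ← arc_concat]
  refine ⟨hc.isChain_arc d (k₁ + 1), hW, ?_⟩
  exact List.isChain_reverse.mpr ((hc.isChain_arc 0 (k₂ + 1)).imp fun _ _ h => h.symm)

theorem IsLongestCycle.add_le_of_isChain_chordCycle (hc : IsLongestCycle G n c) (hk₂ : k₂ < d)
    (hk₁ : d + k₁ < n) (hPW : (P ++ W).Nodup) (hoff : ∀ x ∈ P ++ W, x ∉ Set.range c)
    (hP : (c a :: (P ++ [c (a + d)])).IsChain G.Adj)
    (hW : (c (a + (d + k₁ : ℕ)) :: (W ++ [c (a + k₂)])).IsChain G.Adj) :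
    P.length + W.length + k₁ + k₂ + 2 ≤ n :=
  length_chordCycle (c := c) (a := a) ▸ hc.length_le_of_isChain
    (hc.1.nodup_chordCycle hk₂ hk₁ hPW hoff) (hc.1.isChain_chordCycle hP hW) getLast?_chordCycle

end Chord

section LongestCycle

variable {V : Type*} {G : SimpleGraph V} {n : ℕ} {c : ZMod n → V}

theorem IsLongestCycle.length_lt_val_sub (hc : IsLongestCycle G n c) {a b : ZMod n} (hab : a ≠ b)
    {P : List V} (hPnd : P.Nodup) (hoff : ∀ x ∈ P, x ∉ Set.range c)
    (hP : (c a :: (P ++ [c b])).IsChain G.Adj) : P.length < (b - a).val := by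
  have : NeZero n := ⟨by have := hc.1.1; omega⟩
  set d := (b - a).val with hd
  have hd0 : d ≠ 0 := (ZMod.val_ne_zero _).mpr (sub_ne_zero.mpr hab.symm)
  have hdn : d < n := ZMod.val_lt _
  -- the cycle `c a, P, c b, c (b + 1), …, c (a - 1)`
  have hW : (c (a + (d + (n - 1 - d) : ℕ)) :: ([] ++ [c (a + (0 : ℕ))])).IsChain G.Adj := by
    rw [show d + (n - 1 - d) = n - 1 by omega, ZMod.add_natCast_sub_self a (by omega : 1 ≤ n)]
    simpa using hc.1.2.2 (a - 1)
  have := hc.add_le_of_isChain_chordCycle (by omega) (by omega) (by simpa using hPnd)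
    (by simpa using hoff) (by rwa [hd, ZMod.add_natCast_val_sub]) hW
  simp only [List.length_nil] at this
  omega

theorem IsLongestCycle.not_isChain_pred (hc : IsLongestCycle G n c) (j : ZMod n) {Q : List V}
    (hQ : Q ≠ []) (hQnd : Q.Nodup) (hoff : ∀ x ∈ Q, x ∉ Set.range c) :
    ¬ (c (j - 1) :: (Q ++ [c j])).IsChain G.Adj := fun h => by
  have : Fact (1 < n) := ⟨by have := hc.1.1; omega⟩
  have := hc.length_lt_val_sub (pred_ne_self j) hQnd hoff h
  rw [sub_sub_cancel, ZMod.val_one] at this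
  exact hQ (List.length_eq_zero_iff.mp (by omega))

theorem IsLongestCycle.not_isChain_pred_sub (hc : IsLongestCycle G n c) {i₁ i₂ : ZMod n}
    (hne : i₁ ≠ i₂) {P W : List V} (hPW : (P ++ W).Nodup) (hoff : ∀ x ∈ P ++ W, x ∉ Set.range c)
    (hP : (c i₁ :: (P ++ [c i₂])).IsChain G.Adj) {j : ℕ} (hj : 1 ≤ j) (hjP : j ≤ P.length) :
    ¬ (c (i₁ - 1) :: (W ++ [c (i₂ - j)])).IsChain G.Adj := fun hW => by
  have : NeZero n := ⟨by have := hc.1.1; omega⟩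
  set d := (i₂ - i₁).val with hd
  have hgap : P.length < d := hc.length_lt_val_sub hne hPW.of_append_left
    (fun x hx => hoff x (List.mem_append_left _ hx)) hP
  have hdn : d < n := ZMod.val_lt _
  -- the cycle `c i₁, P, c i₂, …, c (i₁ - 1), W, c (i₂ - j), …, c (i₁ + 1)` misses only `j - 1`
  -- vertices of `c`
  have := hc.add_le_of_isChain_chordCycle (a := i₁) (d := d) (k₁ := n - 1 - d) (k₂ := d - j)
    (by omega) (by omega) hPW hoff (by rwa [hd, ZMod.add_natCast_val_sub])
    (by rwa [show d + (n - 1 - d) = n - 1 by omega, ZMod.add_natCast_sub_self _ (by omega),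
      Nat.cast_one, hd, ZMod.add_natCast_sub_of_le _ _ (by omega)])
  omega

end LongestCycle

section Paths

variable {V : Type*} {G : SimpleGraph V}

theorem exists_isChain_of_connected_induce {H : Set V} (hH : (G.induce H).Connected) {x y : V}
    (hx : x ∈ H) (hy : y ∈ H) : ∃ Q : List V, Q.Nodup ∧ (∀ v ∈ Q, v ∈ H) ∧ Q.IsChain G.Adj ∧
      Q.head? = some x ∧ Q.getLast? = some y := by
  obtain ⟨p, hp⟩ := (hH.preconnected ⟨x, hx⟩ ⟨y, hy⟩).exists_isPath
  refine ⟨p.support.map Subtype.val, hp.support_nodup.map Subtype.val_injective,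
    fun v hv => ?_,
    (List.isChain_map _).mpr (p.isChain_adj_support.imp fun _ _ h => h), ?_, ?_⟩
  · obtain ⟨⟨w, hw⟩, -, rfl⟩ := List.mem_map.mp hv
    exact hw
  · rw [← p.cons_tail_support]
    rfl
  · rw [List.getLast?_map, List.getLast?_eq_some_getLast p.support_ne_nil, p.getLast_support]
    rfl

theorem isChain_adj_reverse {u v : V} {P : List V} (h : (u :: (P ++ [v])).IsChain G.Adj) :
    (v :: (P.reverse ++ [u])).IsChain G.Adj := by
  simpa using List.isChain_reverse.mpr (h.imp fun _ _ h => h.symm)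

theorem P5Free.false_of_induced_path (hG : P5Free G) {a b c d e : V} (hab : G.Adj a b)
    (hbc : G.Adj b c) (hcd : G.Adj c d) (hde : G.Adj d e) (hac : ¬ G.Adj a c)
    (had : ¬ G.Adj a d) (hae : ¬ G.Adj a e) (hbd : ¬ G.Adj b d) (hbe : ¬ G.Adj b e)
    (hce : ¬ G.Adj c e) : False := by
  have := hab.ne; have := hbc.ne; have := hcd.ne; have := hde.ne
  have : a ≠ c := by rintro rfl; exact had hcd
  have : a ≠ d := by rintro rfl; exact hac hcd.symm
  have : a ≠ e := by rintro rfl; exact had hde.symm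
  have : b ≠ d := by rintro rfl; exact hbe hde
  have : b ≠ e := by rintro rfl; exact hbd hde.symm
  have : c ≠ e := by rintro rfl; exact hbe hbc
  refine hG ⟨fun i => [a, b, c, d, e].getD i a, ⟨fun i j hi hj h => ?_, fun i hi => ?_⟩,
    fun i j hi hj h => ?_⟩
  · interval_cases i <;> interval_cases j <;>
      simp only [List.getD_cons_zero, List.getD_cons_succ] at h <;>
      first | rfl | exact absurd h (by assumption) | exact absurd h.symm (by assumption)
  · have : i < 4 := by omega
    interval_cases i <;> assumption
  · interval_cases i <;> interval_cases j <;>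
      simp only [List.getD_cons_zero, List.getD_cons_succ] at h <;>
      first | omega | exact absurd rfl h.ne | exact absurd h (by assumption) |
        exact absurd h.symm (by assumption)

end Paths

section Components

variable {V : Type*} {G : SimpleGraph V}

theorem forall_mem_of_connected_induce {S : Set V} (hS : (G.induce S).Connected) {p : V → Prop}
    {u : V} (hu : u ∈ S) (hpu : p u) (hstep : ∀ x ∈ S, ∀ y ∈ S, p x → G.Adj x y → p y) :
    ∀ v ∈ S, p v := by
  suffices h : ∀ (x y : S) (w : (G.induce S).Walk x y), p x → p y from
    fun v hv => h _ ⟨v, hv⟩ (hS.preconnected ⟨u, hu⟩ ⟨v, hv⟩).some hpu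
  intro x y w
  induction w with
  | nil => exact id
  | cons hxy _ ih => exact fun hx => ih (hstep _ (Subtype.prop _) _ (Subtype.prop _) hx hxy)

theorem IsCompOff.ncard_le_muC [Finite V] {R K : Set V} (hK : IsCompOff G R K) :
    K.ncard ≤ muC G R :=
  le_csSup ⟨Nat.card V, by rintro _ ⟨K, -, rfl⟩; exact Set.ncard_le_card K⟩ ⟨K, hK, rfl⟩

variable {R R' S H : Set V}

theorem IsCompOff.of_exchange [Finite V] (hH : IsCompOff G R H) (hRR' : R \ S ⊆ R')
    (hR'R : R' ⊆ R ∪ H) (hR'H : (R' ∩ H).Nonempty) (hS : ∀ s ∈ S, G.neighborSet s ⊆ R')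
    {K : Set V} (hK : IsCompOff G R' K) :
    K.ncard ≤ 1 ∨ K.ncard < H.ncard ∨ (IsCompOff G R K ∧ K ≠ H) := by
  obtain ⟨hKne, hKR', hKconn, hKclosed⟩ := hK
  by_cases hKS : ∃ s ∈ K, s ∈ S
  · obtain ⟨s, hsK, hsS⟩ := hKS
    have hKs : K ⊆ {s} := forall_mem_of_connected_induce hKconn (p := (· = s)) hsK rfl
      fun x _ y hy hxs hxy => absurd (hS s hsS (hxs ▸ hxy)) (Set.disjoint_left.mp hKR' hy)
    exact .inl ((Set.ncard_le_ncard hKs).trans (Set.ncard_singleton s).le)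
  push Not at hKS
  have hKR : ∀ v ∈ K, v ∉ R := fun v hv hvR =>
    Set.disjoint_left.mp hKR' hv (hRR' ⟨hvR, hKS v hv⟩)
  obtain ⟨z, hzR', hzH⟩ := hR'H
  by_cases hKH : ∃ u ∈ K, u ∈ H
  · obtain ⟨u, huK, huH⟩ := hKH
    have hKsub : K ⊆ H := forall_mem_of_connected_induce hKconn huK huH
      fun x _ y hy hx hxy => by_contra fun hyH => hH.2.2.2 x y hx hyH (hKR y hy) hxy
    refine .inr (.inl (Set.ncard_lt_ncard ⟨hKsub, fun hHK => ?_⟩))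
    exact Set.disjoint_left.mp hKR' (hHK hzH) hzR'
  push Not at hKH
  refine .inr (.inr ⟨⟨hKne, Set.disjoint_left.mpr hKR, hKconn, fun u v hu hv hvR huv => ?_⟩,
    fun hKH' => hKH z (hKH' ▸ hzH) hzH⟩)
  by_cases hvR' : v ∈ R'
  · have hvH : v ∈ H := (hR'R hvR').resolve_left hvR
    exact hH.2.2.2 v u hvH (hKH u hu) (hKR u hu) huv.symm
  · exact hKclosed u v hu hv hvR' huv

theorem muC_le_of_exchange [Finite V] (hH : IsCompOff G R H) (hRR' : R \ S ⊆ R')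
    (hR'R : R' ⊆ R ∪ H) (hR'H : (R' ∩ H).Nonempty) (hS : ∀ s ∈ S, G.neighborSet s ⊆ R') :
    muC G R' ≤ muC G R := by
  have hH1 : 1 ≤ H.ncard := hH.1.ncard_pos
  refine csSup_le' ?_
  rintro _ ⟨K, hK, rfl⟩
  rcases hH.of_exchange hRR' hR'R hR'H hS hK with h | h | ⟨hK, -⟩
  · exact h.trans (hH1.trans hH.ncard_le_muC)
  · exact h.le.trans hH.ncard_le_muC
  · exact hK.ncard_le_muC

theorem omegaC_lt_of_exchange [Finite V] (hH : IsCompOff G R H) (hHmu : H.ncard = muC G R)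
    (hH2 : 2 ≤ H.ncard) (hRR' : R \ S ⊆ R') (hR'R : R' ⊆ R ∪ H) (hR'H : (R' ∩ H).Nonempty)
    (hS : ∀ s ∈ S, G.neighborSet s ⊆ R') (hmu : muC G R' = muC G R) :
    omegaC G R' < omegaC G R := by
  calc omegaC G R' ≤ ({K | IsCompOff G R K ∧ K.ncard = muC G R} \ {H}).ncard := by
        refine Set.ncard_le_ncard (fun K ⟨hK, hKn⟩ => ?_)
        rcases hH.of_exchange hRR' hR'R hR'H hS hK with h | h | ⟨hK, hKH⟩
        · omega
        · omega
        · exact ⟨⟨hK, hKn.trans hmu⟩, hKH⟩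
    _ < omegaC G R := Set.ncard_sdiff_singleton_lt_of_mem ⟨hH, hHmu⟩

end Components

section Exchange

variable {V : Type*} {G : SimpleGraph V} {n : ℕ} {c : ZMod n → V} {i₁ i₂ : ZMod n} {P : List V}

theorem IsLongestCycle.not_adj_pred_of_mem (hc : IsLongestCycle G n c) {H : Set V}
    (hH : IsCompOff G (Set.range c) H) {j : ZMod n} {x y : V} (hx : x ∈ H)
    (hjx : G.Adj (c j) x) (hy : y ∈ H) : ¬ G.Adj (c (j - 1)) y := fun hjy => by
  obtain ⟨Q, hQnd, hQH, hQ, hQy, hQx⟩ := exists_isChain_of_connected_induce hH.2.2.1 hy hx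
  exact hc.not_isChain_pred j (by rintro rfl; simp at hQy) hQnd
    (fun v hv => Set.disjoint_left.mp hH.2.1 (hQH v hv))
    (hQ.cons_append_singleton hQy hQx hjy hjx.symm)

theorem IsLongestCycle.exists_isLongestCycle_exchange (hc : IsLongestCycle G n c) (hne : i₁ ≠ i₂)
    (hPnd : P.Nodup) (hoff : ∀ x ∈ P, x ∉ Set.range c)
    (hP : (c i₁ :: (P ++ [c i₂])).IsChain G.Adj) (hP2 : 2 ≤ P.length)
    (hE : G.Adj (c (i₁ - 2)) (c (i₂ - 2))) :
    ∃ (m : ℕ) (f : ZMod m → V), IsLongestCycle G m f ∧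
      Set.range f = Set.range c \ {c (i₁ - 1), c (i₂ - 1)} ∪ {x | x ∈ P} := by
  have : NeZero n := ⟨by have := hc.1.1; omega⟩
  set d := (i₂ - i₁).val with hd
  have hgap₁ : P.length < d := hc.length_lt_val_sub hne hPnd hoff hP
  have hgap₂ : P.length < (i₁ - i₂).val := by
    simpa using hc.length_lt_val_sub hne.symm (List.nodup_reverse.mpr hPnd) (by simpa using hoff)
      (isChain_adj_reverse hP)
  have hsum := ZMod.val_sub_add_val_sub hne
  -- `C'` is `c i₁, P, c i₂, …, c (i₁ - 2), c (i₂ - 2), …, c (i₁ + 1)`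
  have hch := hc.1.isChain_chordCycle (a := i₁) (d := d) (k₁ := n - 2 - d) (k₂ := d - 2)
    (W := []) (by rwa [ZMod.add_natCast_val_sub]) (by
      rw [show d + (n - 2 - d) = n - 2 by omega, ZMod.add_natCast_sub_self _ (by omega),
        ZMod.add_natCast_sub_of_le _ _ (by omega)]
      simpa using hE)
  have hnd := hc.1.nodup_chordCycle (a := i₁) (d := d) (k₁ := n - 2 - d) (k₂ := d - 2) (W := [])
    (by omega) (by omega) (by simpa using hPnd) (by simpa using hoff)
  obtain ⟨f, hf, hrange⟩ := exists_isCycleOn_of_isChain (by rw [length_chordCycle]; omega) hnd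
    hch getLast?_chordCycle
  refine ⟨_, f, ⟨hf, fun m g hg => (hc.2 m g hg).trans (by rw [length_chordCycle]; omega)⟩, ?_⟩
  have hpred₁ : c (i₁ - 1) = c (i₁ + (n - 1 : ℕ)) := by
    rw [ZMod.add_natCast_sub_self _ (by omega), Nat.cast_one]
  have hpred₂ : c (i₂ - 1) = c (i₁ + (d - 1 : ℕ)) := by
    rw [ZMod.add_natCast_sub_of_le _ _ (by omega), Nat.cast_one]
  ext x
  simp only [hrange, Set.mem_ofPred_eq, mem_chordCycle, List.not_mem_nil, false_or,
    Set.mem_union, Set.mem_sdiff, Set.mem_insert_iff, Set.mem_singleton_iff, hpred₁, hpred₂]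
  constructor
  · rintro (hx | ⟨t, ht, rfl⟩)
    · exact .inr hx
    refine .inl ⟨⟨_, rfl⟩, ?_⟩
    rintro (h | h) <;> have := hc.1.eq_of_apply_add_eq (by omega) (by omega) h <;> omega
  · rintro (⟨⟨j, rfl⟩, hj⟩ | hx)
    · rw [← ZMod.add_natCast_val_sub i₁ j] at hj ⊢
      refine .inr ⟨_, ?_, rfl⟩
      have := (j - i₁).val_lt
      have h₁ : (j - i₁).val ≠ n - 1 := fun h => hj (.inl (by rw [h]))
      have h₂ : (j - i₁).val ≠ d - 1 := fun h => hj (.inr (by rw [h]))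
      omega
    · exact .inl hx

theorem P5Free.neighborSet_pred_subset (hG : P5Free G) (hc : IsLongestCycle G n c) {H : Set V}
    (hH : IsCompOff G (Set.range c) H) (hne : i₁ ≠ i₂) (hPnd : P.Nodup) (hPH : ∀ x ∈ P, x ∈ H)
    (hP : (c i₁ :: (P ++ [c i₂])).IsChain G.Adj) (hP2 : 2 ≤ P.length)
    (hE : G.Adj (c (i₁ - 2)) (c (i₂ - 2))) {x : V} (hx : x ∈ H) (hx₁ : G.Adj (c i₁) x) :
    G.neighborSet (c (i₁ - 1)) ⊆ Set.range c \ {c (i₁ - 1), c (i₂ - 1)} := by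
  have hoff : ∀ z ∈ P, z ∉ Set.range c := fun z hz => Set.disjoint_left.mp hH.2.1 (hPH z hz)
  have hPnd' : (P ++ []).Nodup := by simpa using hPnd
  have hoff' : ∀ z ∈ P ++ [], z ∉ Set.range c := by simpa using hoff
  have h₁₂ : ¬ G.Adj (c (i₁ - 1)) (c (i₂ - 2)) := fun h =>
    hc.not_isChain_pred_sub hne hPnd' hoff' hP (j := 2) (by omega) hP2 (by simpa using h)
  have h₁₁ : ¬ G.Adj (c (i₁ - 1)) (c (i₂ - 1)) := fun h =>
    hc.not_isChain_pred_sub hne hPnd' hoff' hP (j := 1) le_rfl (by omega) (by simpa using h)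
  have h₂₁ : ¬ G.Adj (c (i₁ - 2)) (c (i₂ - 1)) := fun h =>
    hc.not_isChain_pred_sub hne.symm (W := []) (by simpa using hPnd) (by simpa using hoff)
      (isChain_adj_reverse hP) (j := 2) (by omega) (by simpa using hP2) (by simpa using h.symm)
  intro y hy
  rw [mem_neighborSet] at hy
  refine ⟨by_contra fun hyc => ?_, ?_⟩
  · have hyP : y ∉ P := fun h => hc.not_adj_pred_of_mem hH hx hx₁ (hPH y h) hy
    have hPy : (P ++ [y]).Nodup := List.nodup_append.mpr
      ⟨hPnd, List.nodup_singleton y, fun z hz w hw => by rintro rfl; simp_all⟩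
    have hPyoff : ∀ z ∈ P ++ [y], z ∉ Set.range c := fun z hz =>
      (List.mem_append.mp hz).elim (hoff z) fun h => List.mem_singleton.mp h ▸ hyc
    refine hG.false_of_induced_path hy.symm (hc.1.adj_sub_two_sub_one i₁).symm hE
      (hc.1.adj_sub_two_sub_one i₂) (fun h => ?_) (fun h => ?_) (fun h => ?_) h₁₂ h₁₁ h₂₁
    · refine hc.not_isChain_pred (i₁ - 1) (Q := [y]) (by simp) (by simp) (by simpa using hyc) ?_
      simpa [sub_sub, one_add_one_eq_two, h.symm] using hy.symm
    · exact hc.not_isChain_pred_sub hne hPy hPyoff hP (j := 2) (by omega) hP2 (by simp [hy, h])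
    · exact hc.not_isChain_pred_sub hne hPy hPyoff hP (j := 1) le_rfl (by omega) (by simp [hy, h])
  · rintro (h | h)
    · exact hy.ne h.symm
    · exact h₁₁ (h ▸ hy)

end Exchange

theorem stmt_14_general (G : SimpleGraph V) (hG : P5Free G)
    (n : ℕ) (c : ZMod n → V) (hc : IsLongestCycle G n c)
    (hmin : ∀ (m : ℕ) (d : ZMod m → V), IsLongestCycle G m d →
      muC G (Set.range c) ≤ muC G (Set.range d) ∧
      (muC G (Set.range c) = muC G (Set.range d) →
        omegaC G (Set.range c) ≤ omegaC G (Set.range d)))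
    (H : Set V) (hH : IsCompOff G (Set.range c) H)
    (hHmu : H.ncard = muC G (Set.range c)) (hH2 : 2 ≤ H.ncard)
    (i1 i2 : ZMod n) (hne : c i1 ≠ c i2)
    (h1 : ∃ x ∈ H, G.Adj (c i1) x) (h2 : ∃ x ∈ H, G.Adj (c i2) x)
    (hcard : 2 ≤ ({x | x ∈ H ∧ G.Adj (c i1) x} ∪ {x | x ∈ H ∧ G.Adj (c i2) x}).ncard) :
    ¬ G.Adj (c (i1 - 2)) (c (i2 - 2)) := by
  intro hE
  have hi : i1 ≠ i2 := fun h => hne (congrArg c h)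
  obtain ⟨x₁, ⟨hx₁, hv₁⟩, x₂, ⟨hx₂, hv₂⟩, hx⟩ := Set.exists_ne_of_two_le_ncard_union h1 h2 hcard
  obtain ⟨P, hPnd, hPH, hPch, hPx₁, hPx₂⟩ := exists_isChain_of_connected_induce hH.2.2.1 hx₁ hx₂
  have hP := hPch.cons_append_singleton hPx₁ hPx₂ hv₁ hv₂.symm
  have hP2 := List.two_le_length_of_head?_of_getLast? hPx₁ hPx₂ hx
  obtain ⟨m, f, hf, hrange⟩ := hc.exists_isLongestCycle_exchange hi hPnd
    (fun x hx => Set.disjoint_left.mp hH.2.1 (hPH x hx)) hP hP2 hE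
  have hRR' : Set.range c \ {c (i1 - 1), c (i2 - 1)} ⊆ Set.range f :=
    hrange ▸ Set.subset_union_left
  have hR'R : Set.range f ⊆ Set.range c ∪ H := hrange ▸ Set.union_subset_union Set.sdiff_subset hPH
  have hR'H : (Set.range f ∩ H).Nonempty :=
    ⟨x₁, hrange ▸ .inr (List.mem_of_mem_head? hPx₁), hx₁⟩
  have hS : ∀ s ∈ ({c (i1 - 1), c (i2 - 1)} : Set V), G.neighborSet s ⊆ Set.range f := by
    rintro s (rfl | rfl) <;> refine .trans ?_ hRR'
    · exact hG.neighborSet_pred_subset hc hH hi hPnd hPH hP hP2 hE hx₁ hv₁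
    · rw [Set.pair_comm]
      exact hG.neighborSet_pred_subset hc hH hi.symm (List.nodup_reverse.mpr hPnd)
        (by simpa using hPH) (isChain_adj_reverse hP) (by simpa using hP2) hE.symm hx₂ hv₂
  obtain ⟨hmu, homega⟩ := hmin m f hf
  have hmu' := le_antisymm hmu (muC_le_of_exchange hH hRR' hR'R hR'H hS)
  exact (homega hmu').not_gt (omegaC_lt_of_exchange hH hHmu hH2 hRR' hR'R hR'H hS hmu'.symm)

theorem stmt_14 (G : SimpleGraph V) (hG : P5Free G)
    (hnd : ∀ (m : ℕ) (d : ZMod m → V), IsLongestCycle G m d → ¬ DominatingCycle G m d)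
    (n : ℕ) (c : ZMod n → V) (hc : IsLongestCycle G n c)
    (hmin : ∀ (m : ℕ) (d : ZMod m → V), IsLongestCycle G m d →
      muC G (Set.range c) ≤ muC G (Set.range d) ∧
      (muC G (Set.range c) = muC G (Set.range d) →
        omegaC G (Set.range c) ≤ omegaC G (Set.range d)))
    (H : Set V) (hH : IsCompOff G (Set.range c) H)
    (hHmu : H.ncard = muC G (Set.range c)) (hH2 : 2 ≤ H.ncard)
    (i1 i2 : ZMod n) (hne : c i1 ≠ c i2)
    (h1 : ∃ x ∈ H, G.Adj (c i1) x) (h2 : ∃ x ∈ H, G.Adj (c i2) x)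
    (hcard : 2 ≤ ({x | x ∈ H ∧ G.Adj (c i1) x} ∪ {x | x ∈ H ∧ G.Adj (c i2) x}).ncard) :
    ¬ G.Adj (c (i1 - 2)) (c (i2 - 2)) :=
  stmt_14_general G hG n c hc hmin H hH hHmu hH2 i1 i2 hne h1 h2 hcard
end

section
/- Let G be a 2-connected {P5, K4⁻}-free graph, C a longest cycle of G (with a fixed orientation) in which no longest cycle of G is dominating, chosen with the minimality conditions on μ(C) and ω(C), H a component of G − C of order μ(C) ≥ 2, and v1, v2 distinct vertices of C each with a neighbor in H such that |N_G(v1;H) ∪ N_G(v2;H)| ≥ 2 and no vertex on the oriented segment from v1⁺ to v2⁻ has a neighbor in H. Then there exists an edge x1x2 of H such that v1x1 and v2x2 are edges of G. -/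
open SimpleGraph

variable {V : Type*} [Fintype V] [DecidableEq V]

section Aux

variable {V : Type*} [Fintype V] [DecidableEq V]

set_option linter.unusedSectionVars false in
lemma p5_aux (G : SimpleGraph V) (hG : P5Free G) (a b c d e : V)
    (hac : a ≠ c) (had : a ≠ d) (hae : a ≠ e) (hbd : b ≠ d) (hbe : b ≠ e) (hce : c ≠ e)
    (ab : G.Adj a b) (bc : G.Adj b c) (cd : G.Adj c d) (de : G.Adj d e)
    (nac : ¬ G.Adj a c) (nad : ¬ G.Adj a d) (nae : ¬ G.Adj a e)
    (nbd : ¬ G.Adj b d) (nbe : ¬ G.Adj b e) (nce : ¬ G.Adj c e) : False := by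
  have hab : a ≠ b := ab.ne
  have hbc : b ≠ c := bc.ne
  have hcd : c ≠ d := cd.ne
  have hde : d ≠ e := de.ne
  have nca : ¬ G.Adj c a := fun h => nac h.symm
  have nda : ¬ G.Adj d a := fun h => nad h.symm
  have nea : ¬ G.Adj e a := fun h => nae h.symm
  have ndb : ¬ G.Adj d b := fun h => nbd h.symm
  have neb : ¬ G.Adj e b := fun h => nbe h.symm
  have nec : ¬ G.Adj e c := fun h => nce h.symm
  have ba := ab.symm; have cb := bc.symm; have dc := cd.symm; have ed := de.symm
  apply hG
  refine ⟨fun i => if i = 0 then a else if i = 1 then b else if i = 2 then c else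
    if i = 3 then d else e, ⟨?_, ?_⟩, ?_⟩
  · intro i j hi hj hij
    interval_cases i <;> interval_cases j <;> simp_all
  · intro i hi
    have hi' : i < 4 := by omega
    interval_cases i <;> simp_all
  · intro i j hi hj hadj
    interval_cases i <;> interval_cases j <;> simp_all

set_option linter.unusedSectionVars false in
lemma k4_aux (G : SimpleGraph V) (hk : K4mFree G) (a b c d : V) (hcd : c ≠ d)
    (ab : G.Adj a b) (ac : G.Adj a c) (ad : G.Adj a d) (bc : G.Adj b c) (bd : G.Adj b d)
    (ncd : ¬ G.Adj c d) : False :=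
  hk ⟨a, b, c, d, ab.ne, ac.ne, ad.ne, bc.ne, bd.ne, hcd, ab, ac, ad, bc, bd, ncd⟩

lemma seg_self' (n : ℕ) (s t : ZMod n) : s ∈ seg n s t :=
  ⟨0, by simp, fun m hm => by omega⟩

lemma seg_mem' (n : ℕ) [NeZero n] (s t : ZMod n) (j : ℕ) (hj : j ≤ (t - s).val) :
    s + (j : ZMod n) ∈ seg n s t := by
  refine ⟨j, rfl, fun m hm heq => ?_⟩
  have h1 : (m : ZMod n) = t - s := by rw [← heq]; ring
  have h2 : m < n := lt_of_le_of_lt (le_of_lt (lt_of_lt_of_le hm hj)) (ZMod.val_lt _)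
  have h3 := ZMod.val_cast_of_lt h2
  rw [h1] at h3
  omega

lemma seg_right' (n : ℕ) [NeZero n] (s t : ZMod n) : t ∈ seg n s t := by
  have h := seg_mem' n s t (t - s).val le_rfl
  rwa [ZMod.natCast_rightInverse _, add_comm, sub_add_cancel] at h

end Aux

theorem stmt_16 (G : SimpleGraph V) (h2 : TwoConnected G)
    (hG : P5Free G) (hk : K4mFree G)
    (hnd : ∀ (m : ℕ) (d : ZMod m → V), IsLongestCycle G m d → ¬ DominatingCycle G m d)
    (n : ℕ) (c : ZMod n → V) (hc : IsLongestCycle G n c)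
    (hmin : ∀ (m : ℕ) (d : ZMod m → V), IsLongestCycle G m d →
      muC G (Set.range c) ≤ muC G (Set.range d) ∧
      (muC G (Set.range c) = muC G (Set.range d) →
        omegaC G (Set.range c) ≤ omegaC G (Set.range d)))
    (H : Set V) (hH : IsCompOff G (Set.range c) H)
    (hHmu : H.ncard = muC G (Set.range c)) (hH2 : 2 ≤ H.ncard)
    (i1 i2 : ZMod n) (hne : c i1 ≠ c i2)
    (h1 : ∃ x ∈ H, G.Adj (c i1) x) (h2' : ∃ x ∈ H, G.Adj (c i2) x)
    (hcard : 2 ≤ ({x | x ∈ H ∧ G.Adj (c i1) x} ∪ {x | x ∈ H ∧ G.Adj (c i2) x}).ncard)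
    (hseg : ∀ k ∈ seg n (i1 + 1) (i2 - 1), ¬ ∃ x ∈ H, G.Adj (c k) x) :
    ∃ x1 x2 : V, x1 ∈ H ∧ x2 ∈ H ∧ G.Adj x1 x2 ∧
      G.Adj (c i1) x1 ∧ G.Adj (c i2) x2 := by
  classical
  have hn3 : 3 ≤ n := hc.1.1
  haveI : NeZero n := ⟨by omega⟩
  have cinj : Function.Injective c := hc.1.2.1
  have cadj : ∀ i, G.Adj (c i) (c (i + 1)) := hc.1.2.2
  by_contra hno
  push_neg at hno
  have hCnotH : ∀ (i : ZMod n) (x : V), x ∈ H → c i ≠ x := by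
    intro i x hx h
    exact (Set.disjoint_right.mp hH.2.1 ⟨i, h⟩) hx
  have hconn : (G.induce H).Connected := hH.2.2.1
  have hnoadj : ∀ k ∈ seg n (i1 + 1) (i2 - 1), ∀ x ∈ H, ¬ G.Adj (c k) x :=
    fun k hk x hx ha => hseg k hk ⟨x, hx, ha⟩
  have hii : i1 ≠ i2 := fun h => hne (by rw [h])
  set D : ℕ := (i2 - i1).val with hDdef
  have hcastD : ((D : ℕ) : ZMod n) = i2 - i1 := ZMod.natCast_rightInverse (n := n) (i2 - i1)
  have hD0 : D ≠ 0 := by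
    intro h
    rw [h] at hcastD
    apply hii
    have : i2 - i1 = 0 := by exact_mod_cast hcastD.symm
    linear_combination -this
  have hDn : D < n := ZMod.val_lt _
  have hi2 : i2 = i1 + (D : ZMod n) := by rw [hcastD]; ring
  have hD1 : D ≠ 1 := by
    intro h
    obtain ⟨x, hx, hax⟩ := h1
    have ht : i2 - 1 = i1 := by rw [hi2, h]; push_cast; ring
    exact hnoadj i1 (ht ▸ seg_right' n (i1 + 1) (i2 - 1)) x hx hax
  have hD2 : 2 ≤ D := by omega
  set s : ℕ → V := fun k => c (i1 + (k : ZMod n)) with hsdef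
  have hs0 : s 0 = c i1 := by simp [hsdef]
  have hsD : s D = c i2 := by rw [hsdef]; rw [hi2]
  have sadj : ∀ k : ℕ, G.Adj (s k) (s (k + 1)) := by
    intro k
    have h := cadj (i1 + (k : ZMod n))
    have he : i1 + (k : ZMod n) + 1 = i1 + ((k + 1 : ℕ) : ZMod n) := by push_cast; ring
    rw [he] at h
    exact h
  have sne : ∀ a b : ℕ, a < n → b < n → a ≠ b → s a ≠ s b := by
    intro a b ha hb hab h
    have h1' : (a : ZMod n) = (b : ZMod n) := add_left_cancel (cinj h)
    have hva := ZMod.val_cast_of_lt ha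
    have hvb := ZMod.val_cast_of_lt hb
    rw [h1'] at hva
    omega
  have hsH : ∀ (k : ℕ) (x : V), x ∈ H → s k ≠ x := fun k x hx => hCnotH _ x hx
  have hsegk : ∀ k : ℕ, 1 ≤ k → k ≤ D - 1 → ∀ x ∈ H, ¬ G.Adj (s k) x := by
    intro k hk1 hk2 x hx ha
    have hsub : (i2 - 1) - (i1 + 1) = ((D - 2 : ℕ) : ZMod n) := by
      rw [hi2]
      push_cast [Nat.cast_sub hD2]
      ring
    have hval : ((i2 - 1) - (i1 + 1)).val = D - 2 := by
      rw [hsub, ZMod.val_cast_of_lt (by omega)]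
    have hmem := seg_mem' n (i1 + 1) (i2 - 1) (k - 1) (by omega)
    have he : (i1 + 1) + ((k - 1 : ℕ) : ZMod n) = i1 + (k : ZMod n) := by
      push_cast [Nat.cast_sub hk1]
      ring
    rw [he] at hmem
    exact hnoadj _ hmem x hx ha
  obtain ⟨a, b, haH, hav1, hbH, hbv2, hab⟩ :
      ∃ a b, a ∈ H ∧ G.Adj (c i1) a ∧ b ∈ H ∧ G.Adj (c i2) b ∧ a ≠ b := by
    have h15 : 1 < ({x | x ∈ H ∧ G.Adj (c i1) x} ∪ {x | x ∈ H ∧ G.Adj (c i2) x}).ncard := by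
      omega
    obtain ⟨p, q, hp, hq, hpq⟩ := (Set.one_lt_ncard_iff (Set.toFinite _)).mp h15
    simp only [Set.mem_union, Set.mem_setOf_eq] at hp hq
    rcases hp with ⟨hpH, hpa⟩ | ⟨hpH, hpa⟩ <;> rcases hq with ⟨hqH, hqa⟩ | ⟨hqH, hqa⟩
    · obtain ⟨b, hbH, hba⟩ := h2'
      rcases eq_or_ne p b with rfl | hne2
      · exact ⟨q, p, hqH, hqa, hpH, hba, hpq.symm⟩
      · exact ⟨p, b, hpH, hpa, hbH, hba, hne2⟩
    · exact ⟨p, q, hpH, hpa, hqH, hqa, hpq⟩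
    · exact ⟨q, p, hqH, hqa, hpH, hpa, hpq.symm⟩
    · obtain ⟨a, haH, haa⟩ := h1
      rcases eq_or_ne a q with rfl | hne2
      · exact ⟨a, p, haH, haa, hpH, hpa, hpq.symm⟩
      · exact ⟨a, q, haH, haa, hqH, hqa, hne2⟩
  have hQex : ∃ L : ℕ, ∃ f : ℕ → V, (∀ i, i ≤ L → f i ∈ H) ∧
      (∀ i, i < L → G.Adj (f i) (f (i + 1))) ∧
      G.Adj (c i1) (f 0) ∧ G.Adj (c i2) (f L) ∧ f 0 ≠ f L := by
    obtain ⟨w⟩ := hconn.preconnected ⟨a, haH⟩ ⟨b, hbH⟩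
    refine ⟨w.length, fun i => (w.getVert i : V), fun i _ => (w.getVert i).2, ?_, ?_, ?_, ?_⟩
    · intro i hi
      exact SimpleGraph.comap_adj.mp (w.adj_getVert_succ hi)
    · show G.Adj (c i1) (w.getVert 0 : V)
      rw [w.getVert_zero]; exact hav1
    · show G.Adj (c i2) (w.getVert w.length : V)
      rw [w.getVert_length]; exact hbv2
    · show (w.getVert 0 : V) ≠ (w.getVert w.length : V)
      rw [w.getVert_zero, w.getVert_length]; exact hab
  obtain ⟨L, hLdef⟩ : ∃ L, L = Nat.find hQex := ⟨_, rfl⟩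
  have hspec := Nat.find_spec hQex
  rw [← hLdef] at hspec
  have hQlt : ∀ m, m < L → ¬ ∃ f : ℕ → V, (∀ i, i ≤ m → f i ∈ H) ∧
      (∀ i, i < m → G.Adj (f i) (f (i + 1))) ∧
      G.Adj (c i1) (f 0) ∧ G.Adj (c i2) (f m) ∧ f 0 ≠ f m := by
    intro m hm
    rw [hLdef] at hm
    exact Nat.find_min hQex hm
  obtain ⟨f, fmem, fadj, fA, fB, fne⟩ := hspec
  have hL2 : 2 ≤ L := by
    by_contra h
    have h01 : L = 0 ∨ L = 1 := by omega
    rcases h01 with h | h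
    · exact fne (by rw [h])
    · exact hno (f 0) (f 1) (fmem 0 (by omega)) (fmem 1 (by omega)) (fadj 0 (by omega))
        fA (by rw [← h]; exact fB)
  have noeq : ∀ i j, i < j → j ≤ L → f i ≠ f j := by
    intro i j hij hjL heq
    apply hQlt (L - (j - i)) (by omega)
    refine ⟨fun t => if t ≤ i then f t else f (t + (j - i)), ?_, ?_, ?_, ?_, ?_⟩
    · intro t ht
      beta_reduce
      split
      · exact fmem t (by omega)
      · exact fmem _ (by omega)
    · intro t ht
      beta_reduce
      rcases Nat.lt_trichotomy t i with h | h | h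
      · rw [if_pos (le_of_lt h), if_pos (by omega : t + 1 ≤ i)]
        exact fadj t (by omega)
      · rw [if_pos (le_of_eq h), if_neg (by omega)]
        rw [show t + 1 + (j - i) = j + 1 by omega, h, heq]
        exact fadj j (by omega)
      · rw [if_neg (by omega), if_neg (by omega)]
        rw [show t + 1 + (j - i) = t + (j - i) + 1 by omega]
        exact fadj (t + (j - i)) (by omega)
    · beta_reduce
      rw [if_pos (Nat.zero_le i)]; exact fA
    · beta_reduce
      by_cases hsp : L - (j - i) ≤ i
      · rw [if_pos hsp, show L - (j - i) = i by omega, heq, show j = L by omega]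
        exact fB
      · rw [if_neg hsp, show L - (j - i) + (j - i) = L by omega]
        exact fB
    · beta_reduce
      rw [if_pos (Nat.zero_le i)]
      by_cases hsp : L - (j - i) ≤ i
      · rw [if_pos hsp, show L - (j - i) = i by omega, heq, show j = L by omega]
        exact fne
      · rw [if_neg hsp, show L - (j - i) + (j - i) = L by omega]
        exact fne
  have nochord : ∀ i j, i + 2 ≤ j → j ≤ L → ¬ G.Adj (f i) (f j) := by
    intro i j hij hjL hadj
    apply hQlt (L - (j - i - 1)) (by omega)
    refine ⟨fun t => if t ≤ i then f t else f (t + (j - i - 1)), ?_, ?_, ?_, ?_, ?_⟩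
    · intro t ht
      beta_reduce
      split
      · exact fmem t (by omega)
      · exact fmem _ (by omega)
    · intro t ht
      beta_reduce
      rcases Nat.lt_trichotomy t i with h | h | h
      · rw [if_pos (le_of_lt h), if_pos (by omega : t + 1 ≤ i)]
        exact fadj t (by omega)
      · rw [if_pos (le_of_eq h), if_neg (by omega)]
        rw [show t + 1 + (j - i - 1) = j by omega, h]
        exact hadj
      · rw [if_neg (by omega), if_neg (by omega)]
        rw [show t + 1 + (j - i - 1) = t + (j - i - 1) + 1 by omega]
        exact fadj (t + (j - i - 1)) (by omega)
    · beta_reduce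
      rw [if_pos (Nat.zero_le i)]; exact fA
    · beta_reduce
      rw [if_neg (by omega), show L - (j - i - 1) + (j - i - 1) = L by omega]
      exact fB
    · beta_reduce
      rw [if_pos (Nat.zero_le i), if_neg (by omega),
        show L - (j - i - 1) + (j - i - 1) = L by omega]
      exact fne
  have notA : ∀ i, 1 ≤ i → i ≤ L - 1 → ¬ G.Adj (c i1) (f i) := by
    intro i hi1 hiL hadj
    apply hQlt (L - i) (by omega)
    refine ⟨fun t => f (t + i), fun t ht => fmem _ (by omega), ?_, ?_, ?_, ?_⟩
    · intro t ht
      beta_reduce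
      rw [show t + 1 + i = t + i + 1 by omega]
      exact fadj (t + i) (by omega)
    · beta_reduce
      rw [show (0 : ℕ) + i = i by omega]; exact hadj
    · beta_reduce
      rw [show L - i + i = L by omega]; exact fB
    · beta_reduce
      rw [show (0 : ℕ) + i = i by omega, show L - i + i = L by omega]
      exact noeq i L (by omega) le_rfl
  have notB : ∀ i, 1 ≤ i → i ≤ L - 1 → ¬ G.Adj (c i2) (f i) := by
    intro i hi1 hiL hadj
    apply hQlt i (by omega)
    exact ⟨f, fun t ht => fmem t (by omega), fun t ht => fadj t (by omega), fA, hadj,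
      noeq 0 i (by omega) (by omega)⟩
  -- basic non-adjacency of v1+ and v2- to H
  have nv1p : ∀ x ∈ H, ¬ G.Adj (s 1) x := hsegk 1 le_rfl (by omega)
  have nv2m : ∀ x ∈ H, ¬ G.Adj (s (D - 1)) x := hsegk (D - 1) (by omega) le_rfl
  have edge2 : G.Adj (s (D - 1)) (s D) := by
    have := sadj (D - 1)
    rwa [show D - 1 + 1 = D by omega] at this
  -- L = 2
  have hL3 : ¬ 3 ≤ L := by
    intro h3
    apply p5_aux G hG (s (D - 1)) (s D) (f L) (f (L - 1)) (f (L - 2))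
    · exact hsH _ _ (fmem L le_rfl)
    · exact hsH _ _ (fmem (L - 1) (by omega))
    · exact hsH _ _ (fmem (L - 2) (by omega))
    · exact hsH _ _ (fmem (L - 1) (by omega))
    · exact hsH _ _ (fmem (L - 2) (by omega))
    · exact (noeq (L - 2) L (by omega) le_rfl).symm
    · exact edge2
    · rw [hsD]; exact fB
    · have h := fadj (L - 1) (by omega)
      rw [show L - 1 + 1 = L by omega] at h
      exact h.symm
    · have h := fadj (L - 2) (by omega)
      rw [show L - 2 + 1 = L - 1 by omega] at h
      exact h.symm
    · exact nv2m _ (fmem L le_rfl)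
    · exact nv2m _ (fmem (L - 1) (by omega))
    · exact nv2m _ (fmem (L - 2) (by omega))
    · rw [hsD]; exact notB (L - 1) (by omega) (by omega)
    · rw [hsD]; exact notB (L - 2) (by omega) (by omega)
    · exact fun h => nochord (L - 2) L (by omega) le_rfl h.symm
  have hL : L = 2 := by omega
  rw [hL] at fB fne
  have fadj0 : G.Adj (f 0) (f 1) := fadj 0 (by omega)
  have fadj1 : G.Adj (f 1) (f 2) := fadj 1 (by omega)
  have fH0 : f 0 ∈ H := fmem 0 (by omega)
  have fH1 : f 1 ∈ H := fmem 1 (by omega)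
  have fH2 : f 2 ∈ H := fmem 2 (by omega)
  have fne02 : f 0 ≠ f 2 := noeq 0 2 (by omega) (by omega)
  have fnadj02 : ¬ G.Adj (f 0) (f 2) := nochord 0 2 (by omega) (by omega)
  have hm1 : ¬ G.Adj (c i1) (f 1) := notA 1 (by omega) (by omega)
  have hm2 : ¬ G.Adj (c i2) (f 1) := notB 1 (by omega) (by omega)
  -- v2 is adjacent to f 0
  have hv2f0 : G.Adj (c i2) (f 0) := by
    by_contra hn2
    apply p5_aux G hG (s (D - 1)) (s D) (f 2) (f 1) (f 0)
    · exact hsH _ _ fH2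
    · exact hsH _ _ fH1
    · exact hsH _ _ fH0
    · exact hsH _ _ fH1
    · exact hsH _ _ fH0
    · exact fne02.symm
    · exact edge2
    · rw [hsD]; exact fB
    · exact fadj1.symm
    · exact fadj0.symm
    · exact nv2m _ fH2
    · exact nv2m _ fH1
    · exact nv2m _ fH0
    · rw [hsD]; exact hm2
    · rw [hsD]; exact hn2
    · exact fun h => fnadj02 h.symm
  -- v1 is adjacent to f 2
  have hv1f2 : G.Adj (c i1) (f 2) := by
    by_contra hn1
    apply p5_aux G hG (s 1) (s 0) (f 0) (f 1) (f 2)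
    · exact hsH _ _ fH0
    · exact hsH _ _ fH1
    · exact hsH _ _ fH2
    · exact hsH _ _ fH1
    · exact hsH _ _ fH2
    · exact fne02
    · exact (sadj 0).symm
    · rw [hs0]; exact fA
    · exact fadj0
    · exact fadj1
    · exact nv1p _ fH0
    · exact nv1p _ fH1
    · exact nv1p _ fH2
    · rw [hs0]; exact hm1
    · rw [hs0]; exact hn1
    · exact fnadj02
  -- v1 and v2 are not adjacent
  have hv1v2 : ¬ G.Adj (c i1) (c i2) := by
    intro h12
    exact k4_aux G hk (c i1) (c i2) (f 0) (f 2) fne02 h12 fA hv1f2 hv2f0 fB fnadj02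
  -- case split on D
  rcases eq_or_lt_of_le hD2 with hDeq | hD3
  · -- D = 2 : build a longer cycle
    haveI : NeZero (n + 2) := ⟨by omega⟩
    haveI : Fact (1 < n + 2) := ⟨by omega⟩
    set g : ℕ → V := fun t => if t = 0 then c i1 else if t = 1 then f 0 else
      if t = 2 then f 1 else if t = 3 then f 2 else s (t - 2) with hgdef
    have fne01 : f 0 ≠ f 1 := fadj0.ne
    have fne12 : f 1 ≠ f 2 := fadj1.ne
    have ginj : ∀ t1 t2, t1 < n + 2 → t2 < n + 2 → g t1 = g t2 → t1 = t2 := by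
      intro t1 t2 h1' h2'' heq
      have hCf : ∀ (k : ℕ) (x : V), x ∈ H → s k ≠ x := hsH
      rcases Nat.lt_or_ge t1 4 with h14 | h14 <;> rcases Nat.lt_or_ge t2 4 with h24 | h24
      · interval_cases t1 <;> interval_cases t2 <;>
          simp only [hgdef] at heq <;> norm_num at heq <;> first
          | rfl
          | (exfalso; revert heq; first
              | exact hCnotH i1 _ fH0
              | exact hCnotH i1 _ fH1
              | exact hCnotH i1 _ fH2
              | exact fun h => hCnotH i1 _ fH0 h.symm
              | exact fun h => hCnotH i1 _ fH1 h.symm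
              | exact fun h => hCnotH i1 _ fH2 h.symm
              | exact fne01
              | exact fun h => fne01 h.symm
              | exact fne12
              | exact fun h => fne12 h.symm
              | exact fne02
              | exact fun h => fne02 h.symm)
      · exfalso
        have hg2 : g t2 = s (t2 - 2) := by
          simp only [hgdef]
          rw [if_neg (by omega), if_neg (by omega), if_neg (by omega), if_neg (by omega)]
        rw [hg2] at heq
        interval_cases t1 <;> simp only [hgdef] at heq <;> norm_num at heq <;> first
          | exact (sne 0 (t2 - 2) (by omega) (by omega) (by omega))
              (by rw [hs0]; exact heq)
          | exact hCf (t2 - 2) _ fH0 heq.symm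
          | exact hCf (t2 - 2) _ fH1 heq.symm
          | exact hCf (t2 - 2) _ fH2 heq.symm
      · exfalso
        have hg1 : g t1 = s (t1 - 2) := by
          simp only [hgdef]
          rw [if_neg (by omega), if_neg (by omega), if_neg (by omega), if_neg (by omega)]
        rw [hg1] at heq
        interval_cases t2 <;> simp only [hgdef] at heq <;> norm_num at heq <;> first
          | exact (sne 0 (t1 - 2) (by omega) (by omega) (by omega))
              (by rw [hs0]; exact heq.symm)
          | exact hCf (t1 - 2) _ fH0 heq
          | exact hCf (t1 - 2) _ fH1 heq
          | exact hCf (t1 - 2) _ fH2 heq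
      · have hg1 : g t1 = s (t1 - 2) := by
          simp only [hgdef]
          rw [if_neg (by omega), if_neg (by omega), if_neg (by omega), if_neg (by omega)]
        have hg2 : g t2 = s (t2 - 2) := by
          simp only [hgdef]
          rw [if_neg (by omega), if_neg (by omega), if_neg (by omega), if_neg (by omega)]
        rw [hg1, hg2] at heq
        by_contra hne'
        exact sne (t1 - 2) (t2 - 2) (by omega) (by omega) (by omega) heq
    have gadj : ∀ t, t < n + 2 → G.Adj (g t) (g ((t + 1) % (n + 2))) := by
      intro t ht
      rcases Nat.lt_or_ge t 4 with h4 | h4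
      · have hmod : (t + 1) % (n + 2) = t + 1 := Nat.mod_eq_of_lt (by omega)
        rw [hmod]
        interval_cases t
        · simpa [hgdef] using fA
        · simpa [hgdef] using fadj0
        · simpa [hgdef] using fadj1
        · have hg4 : g 4 = s 2 := by
            simp only [hgdef]
            rw [if_neg (by omega), if_neg (by omega), if_neg (by omega), if_neg (by omega)]
          have hg3 : g 3 = f 2 := by norm_num [hgdef]
          have hs2 : s 2 = c i2 := by rw [← hDeq] at hsD; exact hsD
          rw [hg3, hg4, hs2]
          exact fB.symm
      · rcases Nat.lt_or_ge t (n + 1) with hlt | hge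
        · have hmod : (t + 1) % (n + 2) = t + 1 := Nat.mod_eq_of_lt (by omega)
          rw [hmod]
          have hg1 : g t = s (t - 2) := by
            simp only [hgdef]
            rw [if_neg (by omega), if_neg (by omega), if_neg (by omega), if_neg (by omega)]
          have hg2 : g (t + 1) = s (t - 1) := by
            simp only [hgdef]
            rw [if_neg (by omega), if_neg (by omega), if_neg (by omega), if_neg (by omega)]
            congr 1 <;> omega
          rw [hg1, hg2]
          have := sadj (t - 2)
          rwa [show t - 2 + 1 = t - 1 by omega] at this
        · have hteq : t = n + 1 := by omega
          have hmod : (t + 1) % (n + 2) = 0 := by rw [hteq]; simp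
          rw [hmod, hteq]
          have hg1 : g (n + 1) = s (n - 1) := by
            simp only [hgdef]
            rw [if_neg (by omega), if_neg (by omega), if_neg (by omega), if_neg (by omega)]
            congr 1 <;> omega
          have hg0 : g 0 = c i1 := by norm_num [hgdef]
          rw [hg1, hg0]
          have h := cadj (i1 + ((n - 1 : ℕ) : ZMod n))
          have he : i1 + ((n - 1 : ℕ) : ZMod n) + 1 = i1 := by
            push_cast [Nat.cast_sub (show 1 ≤ n by omega)]
            simp
          rw [he] at h
          exact h
    have hcyc : IsCycleOn G (n + 2) (fun j : ZMod (n + 2) => g j.val) := by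
      refine ⟨by omega, ?_, ?_⟩
      · intro j k h
        have := ginj j.val k.val (ZMod.val_lt j) (ZMod.val_lt k) h
        have hj := ZMod.natCast_rightInverse (n := n + 2) j
        have hk := ZMod.natCast_rightInverse (n := n + 2) k
        rw [← hj, ← hk, this]
      · intro j
        have hval : (j + 1).val = (j.val + 1) % (n + 2) := by
          rw [ZMod.val_add, ZMod.val_one]
        simp only [hval]
        exact gadj j.val (ZMod.val_lt j)
    have := hc.2 (n + 2) _ hcyc
    omega
  · -- D ≥ 3
    have claimv2 : ∀ j, j ≤ D - 2 → G.Adj (c i2) (s (D - 1 - j)) := by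
      intro j
      induction j with
      | zero =>
        intro _
        rw [show D - 1 - 0 = D - 1 by omega, ← hsD]
        exact edge2.symm
      | succ j ih =>
        intro hj
        have ihadj := ih (by omega)
        set k : ℕ := D - 1 - (j + 1) with hkdef
        have hk1 : 1 ≤ k := by omega
        have hk2 : k + 1 ≤ D - 1 := by omega
        have hkk : D - 1 - j = k + 1 := by omega
        rw [hkk] at ihadj
        by_contra hnadj
        apply p5_aux G hG (f 1) (f 2) (c i2) (s (k + 1)) (s k)
        · exact fun h => hCnotH i2 _ fH1 h.symm
        · exact fun h => hsH (k + 1) _ fH1 h.symm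
        · exact fun h => hsH k _ fH1 h.symm
        · exact fun h => hsH (k + 1) _ fH2 h.symm
        · exact fun h => hsH k _ fH2 h.symm
        · rw [← hsD]; exact sne D k (by omega) (by omega) (by omega)
        · exact fadj1
        · exact fB.symm
        · exact ihadj
        · have := sadj k
          exact this.symm
        · exact fun h => hm2 h.symm
        · exact fun h => hsegk (k + 1) (by omega) (by omega) (f 1) fH1 h.symm
        · exact fun h => hsegk k (by omega) (by omega) (f 1) fH1 h.symm
        · exact fun h => hsegk (k + 1) (by omega) (by omega) (f 2) fH2 h.symm
        · exact fun h => hsegk k (by omega) (by omega) (f 2) fH2 h.symm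
        · exact hnadj
    have hv2s1 : G.Adj (c i2) (s 1) := by
      have := claimv2 (D - 2) le_rfl
      rwa [show D - 1 - (D - 2) = 1 by omega] at this
    have hv2s2 : G.Adj (c i2) (s 2) := by
      have := claimv2 (D - 3) (by omega)
      rwa [show D - 1 - (D - 3) = 2 by omega] at this
    have hv1s1 : G.Adj (c i1) (s 1) := by
      have := sadj 0
      rwa [hs0] at this
    have hv1s2 : G.Adj (c i1) (s 2) := by
      by_contra hn
      apply p5_aux G hG (f 1) (f 0) (c i1) (s 1) (s 2)
      · exact fun h => hCnotH i1 _ fH1 h.symm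
      · exact fun h => hsH 1 _ fH1 h.symm
      · exact fun h => hsH 2 _ fH1 h.symm
      · exact fun h => hsH 1 _ fH0 h.symm
      · exact fun h => hsH 2 _ fH0 h.symm
      · rw [← hs0]; exact sne 0 2 (by omega) (by omega) (by omega)
      · exact fadj0.symm
      · exact fA.symm
      · exact hv1s1
      · exact sadj 1
      · exact fun h => hm1 h.symm
      · exact fun h => hsegk 1 (by omega) (by omega) (f 1) fH1 h.symm
      · exact fun h => hsegk 2 (by omega) (by omega) (f 1) fH1 h.symm
      · exact fun h => hsegk 1 (by omega) (by omega) (f 0) fH0 h.symm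
      · exact fun h => hsegk 2 (by omega) (by omega) (f 0) fH0 h.symm
      · exact hn
    exact k4_aux G hk (s 1) (s 2) (c i1) (c i2) hne (sadj 1) hv1s1.symm hv2s1.symm
      hv1s2.symm hv2s2.symm hv1v2
end

section
/- Let G be a graph, C a longest cycle of G with a fixed orientation, H a component of G − C, and v1, v2 distinct vertices on C each having a neighbor in H with |N_G(v1;H) ∪ N_G(v2;H)| ≥ 2. Then neither v1⁻v2⁻² nor v1⁺v2⁺² is an edge of G. -/
open SimpleGraph

variable {V : Type*} [Fintype V] [DecidableEq V]

/-! If `c (i1 - 1)` were adjacent to `c (i2 - 2)`, pick distinct `x ∈ N(c i1; H)` and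
`y ∈ N(c i2; H)` and a path `x ⇝ y` inside `H`. Walking forward along `C` from `c i2` to
`c (i1 - 1)`, taking the chord to `c (i2 - 2)`, walking backward to `c i1`, and returning through
`x ⇝ y` to `c i2` gives a cycle that skips only `c (i2 - 1)` but picks up at least two vertices of
`H`, so it is longer than `C`. The claim about `c (i1 + 1) c (i2 + 2)` is the same statement for
the reverse orientation of `C`. -/

section

omit [Fintype V] [DecidableEq V]

variable {G : SimpleGraph V} {n : ℕ} {c : ZMod n → V}

namespace IsPathOn

variable {a b : ℕ} {p q : ℕ → V}

theorem mono (hp : IsPathOn G a p) (hba : b ≤ a) : IsPathOn G b p :=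
  ⟨fun i j hi hj => hp.1 i j (by omega) (by omega), fun i hi => hp.2 i (by omega)⟩

theorem append (hp : IsPathOn G a p) (hq : IsPathOn G b q) (ha : 0 < a)
    (hadj : G.Adj (p (a - 1)) (q 0)) (hdisj : ∀ i < a, ∀ j < b, p i ≠ q j) :
    IsPathOn G (a + b) (fun k => if k < a then p k else q (k - a)) := by
  refine ⟨fun i j hi hj hij => ?_, fun i hi => ?_⟩
  · by_cases hia : i < a <;> by_cases hja : j < a <;> simp only [hia, hja, if_true, if_false] at hij
    · exact hp.1 i j hia hja hij
    · exact absurd hij (hdisj i hia (j - a) (by omega))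
    · exact absurd hij.symm (hdisj j hja (i - a) (by omega))
    · have := hq.1 (i - a) (j - a) (by omega) (by omega) hij
      omega
  · rcases lt_trichotomy (i + 1) a with hi1 | hi1 | hi1
    · simpa only [if_pos hi1, if_pos (by omega : i < a)] using hp.2 i hi1
    · obtain rfl := hi1
      simpa using hadj
    · simpa only [if_neg (by omega : ¬ i < a), if_neg (by omega : ¬ i + 1 < a),
        show i + 1 - a = i - a + 1 by omega] using hq.2 (i - a) (by omega)

theorem isCycleOn (hp : IsPathOn G a p) (ha : 3 ≤ a) (hclose : G.Adj (p (a - 1)) (p 0)) :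
    IsCycleOn G a (fun i => p i.val) := by
  have : NeZero a := ⟨by omega⟩
  refine ⟨ha, fun i j hij => ZMod.val_injective a (hp.1 _ _ i.val_lt j.val_lt hij), fun i => ?_⟩
  have hsucc : (i + 1).val = (i.val + 1) % a := by
    conv_lhs => rw [← ZMod.natCast_zmod_val i, ← Nat.cast_succ, ZMod.val_natCast]
  change G.Adj (p i.val) (p (i + 1).val)
  have hia := i.val_lt
  rcases Nat.lt_or_ge (i.val + 1) a with hi | hi
  · rw [hsucc, Nat.mod_eq_of_lt hi]
    exact hp.2 _ hi
  · rw [hsucc, show i.val + 1 = a by omega, Nat.mod_self,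
      show i.val = a - 1 by omega]
    exact hclose

end IsPathOn

theorem SimpleGraph.Walk.IsPath.isPathOn {x y : V} {q : G.Walk x y} (hq : q.IsPath) :
    IsPathOn G (q.length + 1) q.getVert :=
  ⟨fun i j hi hj hij => hq.getVert_injOn (Nat.lt_succ_iff.mp hi) (Nat.lt_succ_iff.mp hj) hij,
    fun i hi => q.adj_getVert_succ (by omega)⟩

theorem SimpleGraph.Connected.exists_isPath_of_induce {H : Set V} (hH : (G.induce H).Connected)
    {x y : V} (hx : x ∈ H) (hy : y ∈ H) : ∃ q : G.Walk x y, q.IsPath ∧ ∀ v ∈ q.support, v ∈ H := by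
  classical
  obtain ⟨w⟩ := hH.preconnected ⟨x, hx⟩ ⟨y, hy⟩
  have hsupp : ∀ v ∈ (w.toPath.1.map (Embedding.induce H).toHom).support, v ∈ H := by
    simp only [Walk.support_map, List.mem_map]
    rintro _ ⟨v, -, rfl⟩
    exact v.2
  exact ⟨_, w.toPath.2.map Subtype.val_injective, hsupp⟩

theorem Set.exists_mem_mem_ne_of_two_le_ncard_union {α : Type*} {S T : Set α} (hS : S.Nonempty)
    (hT : T.Nonempty) (h : 2 ≤ (S ∪ T).ncard) : ∃ a ∈ S, ∃ b ∈ T, a ≠ b := by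
  by_contra! hST
  obtain ⟨s, hs⟩ := hS
  obtain ⟨t, ht⟩ := hT
  have hall : ∀ u ∈ S ∪ T, u = t := by
    rintro u (hu | hu)
    exacts [hST u hu t ht, (hST s hs u hu).symm.trans (hST s hs t ht)]
  have := (Set.ncard_le_one (Set.finite_of_ncard_ne_zero (by omega))).2
    fun a ha b hb => (hall a ha).trans (hall b hb).symm
  omega

namespace IsCycleOn

theorem comp_neg (hc : IsCycleOn G n c) : IsCycleOn G n (fun i => c (-i)) :=
  ⟨hc.1, hc.2.1.comp neg_injective, fun i => by
    have h := (hc.2.2 (-i - 1)).symm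
    rwa [sub_add_cancel, ← neg_add'] at h⟩

theorem isPathOn_add (hc : IsCycleOn G n c) (s : ZMod n) :
    IsPathOn G n (fun k => c (s + k)) := by
  refine ⟨fun i j hi hj hij => ?_, fun i _ => ?_⟩
  · have := (ZMod.natCast_eq_natCast_iff' i j n).1 (add_left_cancel (hc.2.1 hij))
    rwa [Nat.mod_eq_of_lt hi, Nat.mod_eq_of_lt hj] at this
  · simpa only [Nat.cast_succ, add_assoc] using hc.2.2 (s + i)

theorem isPathOn_sub (hc : IsCycleOn G n c) (s : ZMod n) :
    IsPathOn G n (fun k => c (s - k)) := by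
  simpa only [neg_add, neg_neg, ← sub_eq_add_neg] using hc.comp_neg.isPathOn_add (-s)

end IsCycleOn

namespace IsLongestCycle

theorem comp_neg (hc : IsLongestCycle G n c) : IsLongestCycle G n (fun i => c (-i)) :=
  ⟨hc.1.comp_neg, hc.2⟩

theorem not_adj_sub_sub_one_sub_two (hc : IsLongestCycle G n c) {s : ZMod n} {t : ℕ}
    (ht : 2 ≤ t) (htn : t < n) {x y : V} (hxy : x ≠ y) {q : G.Walk x y} (hq : q.IsPath)
    (hqc : ∀ v ∈ q.support, v ∉ Set.range c) (hx : G.Adj (c (s - t)) x) (hy : G.Adj (c s) y) :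
    ¬ G.Adj (c (s - t - 1)) (c (s - 2)) := by
  intro hadj
  -- the cycle `c s, …, c (s - t - 1), c (s - 2), …, c (s - t), q` of length `n + q.length`
  have hfwd := (hc.1.isPathOn_add s).mono (b := n - t) (by omega)
  have hbwd := (hc.1.isPathOn_sub (s - 2)).mono (b := t - 1) (by omega)
  have hAB := hfwd.append hbwd (by omega) ?chord ?disjoint_arcs
  have hABq := hAB.append hq.isPathOn (by omega) ?enter_q ?disjoint_q
  have hlong := hc.2 _ _ (hABq.isCycleOn (by omega) ?close)
  · have : q.length ≠ 0 := fun h => hxy (Walk.eq_of_length_eq_zero h)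
    omega
  case chord =>
    rw [show n - t - 1 = n - (t + 1) by omega, Nat.cast_sub (by omega), ZMod.natCast_self]
    convert hadj using 2 <;> push_cast <;> ring
  case disjoint_arcs =>
    intro i hi j hj h
    have hij : ((i + j + 2 : ℕ) : ZMod n) = 0 := by
      push_cast
      linear_combination hc.1.2.1 h
    have := Nat.le_of_dvd (by omega) ((ZMod.natCast_eq_zero_iff _ _).1 hij)
    omega
  case enter_q =>
    simp only [if_neg (by omega : ¬ n - t + (t - 1) - 1 < n - t),
      show n - t + (t - 1) - 1 - (n - t) = t - 2 by omega, Walk.getVert_zero]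
    convert hx using 2
    push_cast [Nat.cast_sub ht]
    ring
  case disjoint_q =>
    intro i _ j _ h
    refine hqc _ (q.getVert_mem_support j) ?_
    split_ifs at h <;> exact ⟨_, h⟩
  case close =>
    simp only [if_neg (by omega : ¬ n - t + (t - 1) + (q.length + 1) - 1 < n - t + (t - 1)),
      if_pos (by omega : 0 < n - t + (t - 1)), if_pos (by omega : 0 < n - t),
      show n - t + (t - 1) + (q.length + 1) - 1 - (n - t + (t - 1)) = q.length by omega,
      Walk.getVert_length, Nat.cast_zero, add_zero]
    exact hy.symm

theorem not_adj_sub_one_sub_two (hc : IsLongestCycle G n c) {i₁ i₂ : ZMod n} (hi : i₁ ≠ i₂)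
    {x y : V} (hxy : x ≠ y) {q : G.Walk x y} (hq : q.IsPath)
    (hqc : ∀ v ∈ q.support, v ∉ Set.range c) (hx : G.Adj (c i₁) x) (hy : G.Adj (c i₂) y) :
    ¬ G.Adj (c (i₁ - 1)) (c (i₂ - 2)) := by
  have : NeZero n := ⟨by have := hc.1.1; omega⟩
  have hi₁ : i₁ = i₂ - (i₂ - i₁).val := by rw [ZMod.natCast_zmod_val]; ring
  obtain h | h | h : (i₂ - i₁).val = 0 ∨ (i₂ - i₁).val = 1 ∨ 2 ≤ (i₂ - i₁).val := by omega
  · rw [h, Nat.cast_zero, sub_zero] at hi₁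
    exact absurd hi₁ hi
  · rw [hi₁, h, Nat.cast_one, show i₂ - 1 - 1 = i₂ - 2 by ring]
    exact G.irrefl
  · rw [hi₁] at hx ⊢
    exact hc.not_adj_sub_sub_one_sub_two h (ZMod.val_lt _) hxy hq hqc hx hy

end IsLongestCycle

end

theorem stmt_17 (G : SimpleGraph V) (n : ℕ) (c : ZMod n → V)
    (hc : IsLongestCycle G n c)
    (H : Set V) (hH : IsCompOff G (Set.range c) H)
    (i1 i2 : ZMod n) (hne : c i1 ≠ c i2)
    (h1 : ∃ x ∈ H, G.Adj (c i1) x) (h2 : ∃ x ∈ H, G.Adj (c i2) x)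
    (hcard : 2 ≤ ({x | x ∈ H ∧ G.Adj (c i1) x} ∪ {x | x ∈ H ∧ G.Adj (c i2) x}).ncard) :
    ¬ G.Adj (c (i1 - 1)) (c (i2 - 2)) ∧ ¬ G.Adj (c (i1 + 1)) (c (i2 + 2)) := by
  obtain ⟨x, hx, y, hy, hxy⟩ := Set.exists_mem_mem_ne_of_two_le_ncard_union h1 h2 hcard
  obtain ⟨q, hq, hqH⟩ := hH.2.2.1.exists_isPath_of_induce hx.1 hy.1
  have hqc : ∀ v ∈ q.support, v ∉ Set.range c := fun v hv => hH.2.1.notMem_of_mem_left (hqH v hv)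
  have hi : i1 ≠ i2 := fun h => hne (congrArg c h)
  refine ⟨hc.not_adj_sub_one_sub_two hi hxy hq hqc hx.2 hy.2, ?_⟩
  have hqc' : ∀ v ∈ q.support, v ∉ Set.range fun i => c (-i) := by
    rwa [show (Set.range fun i => c (-i)) = Set.range c from neg_surjective.range_comp c]
  have h := hc.comp_neg.not_adj_sub_one_sub_two (neg_injective.ne hi) hxy hq hqc'
    (by simpa using hx.2) (by simpa using hy.2)
  beta_reduce at h
  rwa [show -(-i1 - 1) = i1 + 1 by ring, show -(-i2 - 2) = i2 + 2 by ring] at h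
end
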